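/- In the CPBS model, the conditional s-th moment of the latent effect satisfies E[T_k^s | Y_{k1}=y_{k1},…,Y_{kn_k}=y_{kn_k}] = [1/p(y_{k1},…,y_{kn_k})] · (e^{1/φ²}/(√(2π)φ)) · (∏_j μ_{kj}^{y_{kj}}/y_{kj}!) · [ K_{y_k+1/2+s}(√(1+2φ²μ_k)/φ²)/(1+2φ²μ_k)^{(y_k+1/2+s)/2} + K_{y_k−1/2+s}(√(1+2φ²μ_k)/φ²)/(1+2φ²μ_k)^{(y_k−1/2+s)/2} ], for any s ∈ ℝ. -/

import Mathlib

open MeasureTheory Real Set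

noncomputable def besselK (l ω : ℝ) : ℝ :=
  (1/2) * ∫ u in Ioi (0:ℝ), u ^ (l - 1) * Real.exp (-(ω/2) * (u + 1/u))

noncomputable def bsDensity (φ t : ℝ) : ℝ :=
  (t ^ (-(1:ℝ)/2) + t ^ (-(3:ℝ)/2)) / (2 * Real.sqrt (2*π) * φ) *
    Real.exp (-(t + 1/t - 2) / (2*φ^2))

/-!
Given `T = t`, the Poisson likelihood is `exp (-μ t) t^y ∏ μ_j^{y_j}/y_j!`, and the two terms
`t^{-1/2}`, `t^{-3/2}` of the Birnbaum–Saunders density turn `t^s` times it into a sum of two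
generalized inverse Gaussian kernels `t^{l-1} exp (-(b t + c/t))` with
`b = (1 + 2φ²μ)/(2φ²)`, `c = 1/(2φ²)`. The substitution `t = √(c/b) u` makes such a kernel
symmetric under `u ↦ 1/u`, and its integral is then `2 (c/b)^{l/2} K_l(2√(bc))`.
-/

open Finset in
theorem prod_exp_mul_pow_div_factorial {ι : Type*} [Fintype ι] (μ : ι → ℝ) (y : ι → ℕ)
    (t : ℝ) :
    ∏ j, exp (-(μ j) * t) * (μ j * t) ^ (y j) / ((y j).factorial : ℝ)
      = t ^ (∑ j, (y j : ℝ)) * exp (-((∑ j, μ j) * t))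
        * ∏ j, μ j ^ (y j) / ((y j).factorial : ℝ) := by
  have hterm : ∀ j ∈ Finset.univ, exp (-(μ j) * t) * (μ j * t) ^ (y j) / ((y j).factorial : ℝ)
      = t ^ (y j) * exp (-(μ j) * t) * (μ j ^ (y j) / ((y j).factorial : ℝ)) :=
    fun j _ ↦ by rw [mul_pow]; ring
  rw [prod_congr rfl hterm, prod_mul_distrib, prod_mul_distrib, prod_pow_eq_pow_sum,
    ← exp_sum, ← sum_mul, sum_neg_distrib, neg_mul, ← Nat.cast_sum, rpow_natCast]

/-- The unnormalised density of the generalized inverse Gaussian law. -/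
noncomputable def gigKernel (l b c t : ℝ) : ℝ :=
  t ^ (l - 1) * exp (-(b * t + c / t))

section gigKernel

variable {l b c : ℝ}

theorem exp_neg_div_le (n : ℕ) (hc : 0 < c) {t : ℝ} (ht : 0 < t) :
    exp (-(c / t)) ≤ n.factorial / c ^ n * t ^ n := by
  have hpos : 0 < (c / t) ^ n / n.factorial := by positivity
  calc exp (-(c / t)) = (exp (c / t))⁻¹ := exp_neg _
    _ ≤ ((c / t) ^ n / n.factorial)⁻¹ :=
        inv_anti₀ hpos (pow_div_factorial_le_exp _ (by positivity) n)
    _ = n.factorial / c ^ n * t ^ n := by rw [div_pow]; field_simp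

theorem integrableOn_gigKernel (hb : 0 < b) (hc : 0 < c) :
    IntegrableOn (gigKernel l b c) (Ioi 0) := by
  obtain ⟨n, hn⟩ := exists_nat_gt (-l)
  have hdom : IntegrableOn (fun t ↦ n.factorial / c ^ n * (t ^ (l - 1 + n) * exp (-b * t)))
      (Ioi 0) := by
    refine Integrable.const_mul ?_ _
    refine (integrableOn_rpow_mul_exp_neg_mul_rpow (s := l - 1 + n) (p := 1) (by linarith)
      zero_lt_one hb).congr_fun (fun t _ ↦ by simp only [rpow_one]) measurableSet_Ioi
  have hcont : ContinuousOn (gigKernel l b c) (Ioi 0) := by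
    refine (continuousOn_id.rpow_const fun t ht ↦ Or.inl (ne_of_gt ht)).mul ?_
    refine continuous_exp.comp_continuousOn (ContinuousOn.neg ?_)
    exact (continuous_const.mul continuous_id).continuousOn.add
      (continuousOn_const.div continuousOn_id fun t ht ↦ ne_of_gt ht)
  refine hdom.mono' (hcont.aestronglyMeasurable measurableSet_Ioi) ?_
  filter_upwards [ae_restrict_mem measurableSet_Ioi] with t (ht : 0 < t)
  rw [norm_of_nonneg (by unfold gigKernel; positivity)]
  calc gigKernel l b c t = t ^ (l - 1) * exp (-(c / t)) * exp (-b * t) := by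
        rw [gigKernel, mul_assoc, ← exp_add]; ring_nf
    _ ≤ t ^ (l - 1) * (n.factorial / c ^ n * t ^ n) * exp (-b * t) := by
        gcongr; exact exp_neg_div_le n hc ht
    _ = n.factorial / c ^ n * (t ^ (l - 1 + n) * exp (-b * t)) := by
        rw [rpow_add ht, rpow_natCast]; ring

theorem gigKernel_mul {r u : ℝ} (hr : 0 < r) (hu : 0 < u) :
    gigKernel l b c (r * u) = r ^ (l - 1) * gigKernel l (b * r) (c / r) u := by
  unfold gigKernel
  rw [mul_rpow hr.le hu.le, mul_assoc]
  congr 3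
  field_simp

theorem integral_gigKernel_self (a : ℝ) :
    ∫ u in Ioi (0:ℝ), gigKernel l a a u = 2 * besselK l (2 * a) := by
  unfold besselK gigKernel
  rw [← mul_assoc, show (2:ℝ) * (1 / 2) = 1 by norm_num, one_mul]
  refine setIntegral_congr_fun measurableSet_Ioi fun u _ ↦ ?_
  congr 2
  ring

theorem integral_gigKernel (hb : 0 < b) (hc : 0 < c) :
    ∫ t in Ioi (0:ℝ), gigKernel l b c t = 2 * (c / b) ^ (l / 2) * besselK l (2 * √(b * c)) := by
  set r := √(c / b) with hr_def
  have hr : 0 < r := sqrt_pos.mpr (by positivity)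
  have hcr : c / r = b * r := by
    have hrr : r * r = c / b := mul_self_sqrt (by positivity)
    field_simp
    rw [sq, hrr]; field_simp
  have hbr : b * r = √(b * c) := by
    rw [show b * c = b ^ 2 * (c / b) by field_simp, sqrt_mul (sq_nonneg b), sqrt_sq hb.le]
  have hrl : r ^ l = (c / b) ^ (l / 2) := by
    rw [hr_def, sqrt_eq_rpow, ← rpow_mul (by positivity)]
    ring_nf
  calc ∫ t in Ioi (0:ℝ), gigKernel l b c t
      = r * ∫ u in Ioi (0:ℝ), gigKernel l b c (r * u) := by
        rw [integral_comp_mul_left_Ioi _ _ hr, mul_zero, smul_eq_mul, mul_inv_cancel_left₀ hr.ne']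
    _ = r * ∫ u in Ioi (0:ℝ), r ^ (l - 1) * gigKernel l (b * r) (b * r) u := by
        rw [setIntegral_congr_fun measurableSet_Ioi fun u hu ↦ gigKernel_mul hr hu, hcr]
    _ = 2 * (c / b) ^ (l / 2) * besselK l (2 * √(b * c)) := by
        rw [integral_const_mul, integral_gigKernel_self, ← hrl, hbr, rpow_sub_one hr.ne']
        field_simp

end gigKernel

theorem integral_gigKernel_bs {φ D : ℝ} (hφ : φ ≠ 0) (hD : 0 < D) (l : ℝ) :
    ∫ t in Ioi (0:ℝ), gigKernel l (D / (2 * φ ^ 2)) (1 / (2 * φ ^ 2)) t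
      = 2 * besselK l (√D / φ ^ 2) / D ^ (l / 2) := by
  have hφ2 : 0 < φ ^ 2 := by positivity
  rw [integral_gigKernel (by positivity) (by positivity),
    show 1 / (2 * φ ^ 2) / (D / (2 * φ ^ 2)) = D⁻¹ by field_simp,
    show D / (2 * φ ^ 2) * (1 / (2 * φ ^ 2)) = D / (2 * φ ^ 2) ^ 2 by ring,
    sqrt_div hD.le, sqrt_sq (by positivity), inv_rpow hD.le]
  field_simp

theorem rpow_mul_exp_mul_bsDensity {φ : ℝ} (hφ : φ ≠ 0) (a M : ℝ) {t : ℝ} (ht : 0 < t) :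
    t ^ a * exp (-(M * t)) * bsDensity φ t
      = exp (1 / φ ^ 2) / (2 * √(2 * π) * φ)
        * (gigKernel (a + 1/2) ((1 + 2 * φ ^ 2 * M) / (2 * φ ^ 2)) (1 / (2 * φ ^ 2)) t
          + gigKernel (a - 1/2) ((1 + 2 * φ ^ 2 * M) / (2 * φ ^ 2)) (1 / (2 * φ ^ 2)) t) := by
  have hexp : exp (-(M * t)) * exp (-(t + 1 / t - 2) / (2 * φ ^ 2))
      = exp (1 / φ ^ 2)
        * exp (-((1 + 2 * φ ^ 2 * M) / (2 * φ ^ 2) * t + 1 / (2 * φ ^ 2) / t)) := by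
    rw [← exp_add, ← exp_add]
    congr 1
    field_simp
    ring
  have hpow : t ^ a * (t ^ (-(1:ℝ)/2) + t ^ (-(3:ℝ)/2))
      = t ^ (a + 1/2 - 1) + t ^ (a - 1/2 - 1) := by
    rw [mul_add, ← rpow_add ht, ← rpow_add ht]
    ring_nf
  unfold gigKernel bsDensity
  calc t ^ a * exp (-(M * t)) * ((t ^ (-(1:ℝ)/2) + t ^ (-(3:ℝ)/2)) / (2 * √(2 * π) * φ)
        * exp (-(t + 1 / t - 2) / (2 * φ ^ 2)))
      = t ^ a * (t ^ (-(1:ℝ)/2) + t ^ (-(3:ℝ)/2)) / (2 * √(2 * π) * φ)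
        * (exp (-(M * t)) * exp (-(t + 1 / t - 2) / (2 * φ ^ 2))) := by ring
    _ = _ := by rw [hexp, hpow]; ring

theorem cpbs_conditional_moments (φ : ℝ) (hφ : 0 < φ) (n : ℕ) (μ : Fin n → ℝ)
    (hμ : ∀ j, 0 < μ j) (y : Fin n → ℕ) (s : ℝ) :
    (∫ t in Ioi (0:ℝ),
        t ^ s *
        ((∏ j, Real.exp (-(μ j) * t) * (μ j * t) ^ (y j) / (Nat.factorial (y j) : ℝ)) *
          bsDensity φ t))
      / (∫ t in Ioi (0:ℝ),
          (∏ j, Real.exp (-(μ j) * t) * (μ j * t) ^ (y j) / (Nat.factorial (y j) : ℝ)) *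
            bsDensity φ t)
    = (1 / ∫ t in Ioi (0:ℝ),
          (∏ j, Real.exp (-(μ j) * t) * (μ j * t) ^ (y j) / (Nat.factorial (y j) : ℝ)) *
            bsDensity φ t) *
      (Real.exp (1/φ^2) / (Real.sqrt (2*π) * φ)) *
      (∏ j, (μ j) ^ (y j) / (Nat.factorial (y j) : ℝ)) *
      (besselK ((∑ j, (y j : ℝ)) + 1/2 + s)
          (Real.sqrt (1 + 2*φ^2*(∑ j, μ j)) / φ^2) /
          (1 + 2*φ^2*(∑ j, μ j)) ^ (((∑ j, (y j : ℝ)) + 1/2 + s)/2)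
       + besselK ((∑ j, (y j : ℝ)) - 1/2 + s)
          (Real.sqrt (1 + 2*φ^2*(∑ j, μ j)) / φ^2) /
          (1 + 2*φ^2*(∑ j, μ j)) ^ (((∑ j, (y j : ℝ)) - 1/2 + s)/2)) := by
  set M := ∑ j, μ j
  set Y := ∑ j, (y j : ℝ)
  have hD : 0 < 1 + 2 * φ ^ 2 * M := by
    have : 0 ≤ M := Finset.sum_nonneg fun j _ ↦ (hμ j).le
    positivity
  have hintegrand : ∀ t ∈ Ioi (0:ℝ),
      t ^ s * ((∏ j, exp (-(μ j) * t) * (μ j * t) ^ (y j) / ((y j).factorial : ℝ))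
        * bsDensity φ t)
      = (∏ j, μ j ^ (y j) / ((y j).factorial : ℝ)) * (exp (1 / φ ^ 2) / (2 * √(2 * π) * φ))
        * (gigKernel (Y + 1/2 + s) ((1 + 2 * φ ^ 2 * M) / (2 * φ ^ 2)) (1 / (2 * φ ^ 2)) t
          + gigKernel (Y - 1/2 + s) ((1 + 2 * φ ^ 2 * M) / (2 * φ ^ 2)) (1 / (2 * φ ^ 2)) t) :=
    fun t ht ↦ calc
      _ = (∏ j, μ j ^ (y j) / ((y j).factorial : ℝ))
          * (t ^ (Y + s) * exp (-(M * t)) * bsDensity φ t) := by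
        rw [prod_exp_mul_pow_div_factorial, rpow_add ht]; ring
      _ = _ := by
        rw [rpow_mul_exp_mul_bsDensity hφ.ne' _ _ ht, add_right_comm Y s, add_sub_right_comm Y s]
        ring
  rw [setIntegral_congr_fun measurableSet_Ioi hintegrand, integral_const_mul,
    integral_add (integrableOn_gigKernel (by positivity) (by positivity))
      (integrableOn_gigKernel (by positivity) (by positivity)),
    integral_gigKernel_bs hφ.ne' hD, integral_gigKernel_bs hφ.ne' hD]
  ring
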